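/- The matrices A = [[2,1],[1,1]] and B = [[1,1],[1,2]] in SL(2,ℝ) generate a discrete group; in particular, the subgroup they generate contains no nontrivial elements of finite order (it is torsion-free). -/

import Mathlib

/-!
Write `A = matA`, `B = matB` and let them act on the upper half-plane by Möbius transformations
`A z = (2z + 1)/(z + 1)`, `B z = (z + 1)/(z + 2)`. The sides of the ideal quadrilateral with
vertices `-1, 0, 1, ∞` cut off four disjoint regions: `Y_A = {|z + 1/2| < 1/2}`,
`X_B = {|z - 1/2| ≤ 1/2}`, `X_A = {Re z ≥ 1}` and `Y_B = {Re z < -1}`. Since `A` maps the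
complement of `Y_A` into `X_A` and `B` maps the complement of `Y_B` into `X_B`, the ping-pong
lemma shows that `A` and `B` generate a free group, which is torsion-free. Discreteness holds
because the group lies in the image of `SL(2, ℤ)`.
-/

open Matrix

/-- The matrix `[[2,1],[1,1]]` as an element of `SL(2,ℝ)`. -/
def matA : Matrix.SpecialLinearGroup (Fin 2) ℝ :=
  ⟨!![2, 1; 1, 1], by norm_num [Matrix.det_fin_two_of]⟩

/-- The matrix `[[1,1],[1,2]]` as an element of `SL(2,ℝ)`. -/
def matB : Matrix.SpecialLinearGroup (Fin 2) ℝ :=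
  ⟨!![1, 1; 1, 2], by norm_num [Matrix.det_fin_two_of]⟩

open UpperHalfPlane Pointwise Function

lemma inv_smul_compl_subset_of_smul_compl_subset {G α : Type*} [Group G] [MulAction G α] {a : G}
    {s t : Set α} (h : a • sᶜ ⊆ t) : a⁻¹ • tᶜ ⊆ s := by
  rwa [Set.smul_set_compl, Set.compl_subset_comm, Set.subset_smul_set_iff, inv_inv]

lemma Complex.abs_re_sub_le_dist (w c : ℂ) : |w.re - c.re| ≤ dist w c := by
  simpa [Complex.dist_eq] using Complex.abs_re_le_norm (w - c)

namespace UpperHalfPlane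

lemma re_lt_one_of_dist_half_le_half (z : ℍ) (h : dist (z : ℂ) (1 / 2) ≤ 1 / 2) : z.re < 1 := by
  rw [Complex.dist_eq, ← sq_le_sq₀ (norm_nonneg _) (by norm_num), Complex.sq_norm,
    Complex.normSq_apply] at h
  simp only [Complex.sub_re, Complex.sub_im, Complex.div_ofNat_re, Complex.div_ofNat_im,
    Complex.one_re, Complex.one_im, zero_div, sub_zero] at h
  nlinarith [z.im_pos, coe_re z, coe_im z]

lemma coe_matA_smul (z : ℍ) : ((matA • z : ℍ) : ℂ) = (2 * z + 1) / (z + 1) := by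
  rw [coe_specialLinearGroup_apply]; simp [matA]

lemma coe_matB_smul (z : ℍ) : ((matB • z : ℍ) : ℂ) = (z + 1) / (z + 2) := by
  rw [coe_specialLinearGroup_apply]; simp [matB]

lemma coe_add_ne_zero (z : ℍ) (x : ℝ) : (z : ℂ) + x ≠ 0 := by
  intro h
  have := congrArg Complex.im h
  simp only [Complex.add_im, Complex.ofReal_im, add_zero, Complex.zero_im] at this
  exact z.im_ne_zero this

lemma one_le_re_matA_smul (z : ℍ) (hz : 1 / 2 ≤ dist (z : ℂ) (-1 / 2)) :
    1 ≤ (matA • z).re := by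
  have hne := coe_add_ne_zero z 1
  push_cast at hne
  have key : ((matA • z : ℍ) : ℂ) = 1 + z / (z + 1) := by
    rw [coe_matA_smul]; field_simp; ring
  have hnum : 0 ≤ z.re * (z.re + 1) + z.im * z.im := by
    rw [Complex.dist_eq, ← sq_le_sq₀ (by norm_num) (norm_nonneg _), Complex.sq_norm,
      Complex.normSq_apply] at hz
    simp only [Complex.sub_re, Complex.sub_im, Complex.div_ofNat_re, Complex.div_ofNat_im,
      Complex.neg_re, Complex.neg_im, Complex.one_re, Complex.one_im, coe_re, coe_im] at hz
    nlinarith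
  rw [UpperHalfPlane.re, key, Complex.add_re, Complex.one_re, le_add_iff_nonneg_right,
    Complex.div_re, ← add_div]
  simp only [Complex.add_re, Complex.add_im, Complex.one_re, Complex.one_im, add_zero, coe_re,
    coe_im]
  exact div_nonneg hnum (Complex.normSq_nonneg _)

lemma dist_matB_smul_half_le_half (z : ℍ) (hz : -1 ≤ z.re) :
    dist ((matB • z : ℍ) : ℂ) (1 / 2) ≤ 1 / 2 := by
  have hne := coe_add_ne_zero z 2
  push_cast at hne
  have key : ((matB • z : ℍ) : ℂ) - 1 / 2 = z / (2 * (z + 2)) := by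
    rw [coe_matB_smul]; field_simp; ring
  have hle : ‖(z : ℂ)‖ ≤ ‖(z : ℂ) + 2‖ := by
    rw [← sq_le_sq₀ (norm_nonneg _) (norm_nonneg _), Complex.sq_norm, Complex.sq_norm,
      Complex.normSq_apply, Complex.normSq_apply]
    simp only [Complex.add_re, Complex.add_im, Complex.re_ofNat, Complex.im_ofNat, add_zero]
    nlinarith [coe_re z]
  rw [Complex.dist_eq, key, norm_div, norm_mul, Complex.norm_ofNat,
    div_le_iff₀ (by positivity [norm_pos_iff.mpr hne])]
  linarith

end UpperHalfPlane

lemma pairwise_disjoint_on_fin_two {α : Type*} [PartialOrder α] [OrderBot α] {s : Fin 2 → α}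
    (h : Disjoint (s 0) (s 1)) : Pairwise (Disjoint on s) := by
  intro i j hij
  fin_cases i <;> fin_cases j
  exacts [absurd rfl hij, h, h.symm, absurd rfl hij]

theorem injective_freeGroupLift_matA_matB : Injective (FreeGroup.lift ![matA, matB]) := by
  set X : Fin 2 → Set ℍ := ![{z | 1 ≤ z.re}, {z | dist (z : ℂ) (1 / 2) ≤ 1 / 2}]
  set Y : Fin 2 → Set ℍ := ![{z | dist (z : ℂ) (-1 / 2) < 1 / 2}, {z | z.re < -1}]
  have hX : ∀ i, ![matA, matB] i • (Y i)ᶜ ⊆ X i := by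
    intro i
    fin_cases i <;> rintro _ ⟨z, hz, rfl⟩
    · exact one_le_re_matA_smul z (not_lt.mp hz)
    · exact dist_matB_smul_half_le_half z (not_lt.mp hz)
  have hXA (z : ℍ) (h : z ∈ X 0) : 1 ≤ z.re := h
  have hXB (z : ℍ) (h : z ∈ X 1) : 0 ≤ z.re ∧ z.re < 1 := by
    have := abs_le.mp ((Complex.abs_re_sub_le_dist _ _).trans h)
    refine ⟨?_, re_lt_one_of_dist_half_le_half z h⟩
    simp only [Complex.div_ofNat_re, Complex.one_re] at this
    linarith [coe_re z]
  have hYA (z : ℍ) (h : z ∈ Y 0) : -1 < z.re ∧ z.re < 0 := by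
    have := abs_lt.mp ((Complex.abs_re_sub_le_dist _ _).trans_lt h)
    simp only [Complex.div_ofNat_re, Complex.neg_re, Complex.one_re] at this
    constructor <;> linarith [coe_re z]
  have hYB (z : ℍ) (h : z ∈ Y 1) : z.re < -1 := h
  refine FreeGroup.injective_lift_of_ping_pong _ X Y (fun i ↦ ?_) ?_ ?_ (fun i j ↦ ?_) hX
    fun i ↦ inv_smul_compl_subset_of_smul_compl_subset (hX i)
  · refine ((Set.nonempty_of_mem (x := I) fun hI ↦ ?_).smul_set).mono (hX i)
    fin_cases i
    · exact (hYA I hI).2.ne I_re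
    · exact absurd (hYB I hI) (by simp)
  · exact pairwise_disjoint_on_fin_two <| Set.disjoint_left.mpr fun z hA hB ↦
      (hXB z hB).2.not_ge (hXA z hA)
  · exact pairwise_disjoint_on_fin_two <| Set.disjoint_left.mpr fun z hA hB ↦
      (hYA z hA).1.not_gt (hYB z hB)
  · fin_cases i <;> fin_cases j <;> refine Set.disjoint_left.mpr fun z hXz hYz ↦ ?_
    · linarith [hXA z hXz, hYA z hYz]
    · linarith [hXA z hXz, hYB z hYz]
    · linarith [hXB z hXz, hYA z hYz]
    · linarith [hXB z hXz, hYB z hYz]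

lemma Matrix.SpecialLinearGroup.discreteTopology_image_coe_of_le_range_intCast {n : Type*}
    [Fintype n] [DecidableEq n] {Γ : Subgroup (SpecialLinearGroup n ℝ)}
    (hΓ : Γ ≤ (SpecialLinearGroup.map (Int.castRingHom ℝ)).range) :
    DiscreteTopology ((fun x : SpecialLinearGroup n ℝ => (x : Matrix n n ℝ)) ''
      (Γ : Set (SpecialLinearGroup n ℝ))) := by
  have : DiscreteTopology (Γ : Set (SpecialLinearGroup n ℝ)) :=
    .of_subset discreteSpecialLinearGroupIntRangeSL hΓ
  exact @Homeomorph.discreteTopology _ _ _ _ this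
    (isClosedEmbedding_val.isEmbedding.homeomorphImage _)

lemma closure_matA_matB_le_range_intCast :
    Subgroup.closure {matA, matB} ≤ (SpecialLinearGroup.map (Int.castRingHom ℝ)).range := by
  let a : SpecialLinearGroup (Fin 2) ℤ := ⟨!![2, 1; 1, 1], by norm_num [Matrix.det_fin_two_of]⟩
  let b : SpecialLinearGroup (Fin 2) ℤ := ⟨!![1, 1; 1, 2], by norm_num [Matrix.det_fin_two_of]⟩
  rw [Subgroup.closure_le, Set.insert_subset_iff, Set.singleton_subset_iff]
  refine ⟨⟨a, Subtype.ext ?_⟩, ⟨b, Subtype.ext ?_⟩⟩ <;>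
    rw [SpecialLinearGroup.map_apply_coe] <;> ext i j <;> fin_cases i <;> fin_cases j <;>
    simp [a, b, matA, matB]

/-- The matrices `A = [[2,1],[1,1]]` and `B = [[1,1],[1,2]]` generate a discrete subgroup
of `SL(2,ℝ)` (its image in the space of matrices is a discrete subspace); in particular the
subgroup they generate is torsion-free: it contains no nontrivial elements of finite order. -/
theorem matA_matB_generate_discrete_torsionFree :
    DiscreteTopology
      ((fun x : Matrix.SpecialLinearGroup (Fin 2) ℝ => (x : Matrix (Fin 2) (Fin 2) ℝ)) ''
        (Subgroup.closure {matA, matB} : Subgroup (Matrix.SpecialLinearGroup (Fin 2) ℝ)) :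
        Set (Matrix (Fin 2) (Fin 2) ℝ)) ∧
    ∀ x ∈ Subgroup.closure {matA, matB}, IsOfFinOrder x → x = 1 := by
  refine ⟨SpecialLinearGroup.discreteTopology_image_coe_of_le_range_intCast
    closure_matA_matB_le_range_intCast, fun x hx hfin ↦ ?_⟩
  have hrange : Subgroup.closure {matA, matB} = (FreeGroup.lift ![matA, matB]).range := by
    rw [FreeGroup.range_lift_eq_closure, Matrix.range_cons_cons_empty]
  obtain ⟨w, rfl⟩ := hrange ▸ hx
  rw [injective_freeGroupLift_matA_matB.isOfFinOrder_iff, isOfFinOrder_iff_eq_one] at hfin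
  rw [hfin, map_one]
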